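/- arXiv:1804.00640 — 3 statements merged into one kernel-verified Lean document; each statement's English description precedes it below -/
import Mathlib

section
/- Let Π and M be orthogonal projections on a finite-dimensional Hilbert space H and φ a density operator on H. Let γ = 1 - Tr(Mφ) and μ = |1/2 - Tr(MΠφΠ) - Tr(M(I-Π)φ(I-Π))|. For 1/2 < ω ≤ 1, let K be the orthogonal projection onto the direct sum of eigenspaces of ΠMΠ + (I-Π)M(I-Π) with eigenvalue in [1-ω, ω]. Then Tr((I-K)φ) ≤ (2μ + 10√γ) / (1 - 4ω(1-ω)). -/
/-!
Write `A = ΠMΠ + (I-Π)M(I-Π)` (the pinching of `M` by `Π`) and `ψ = MφM`. Jordan's lemma in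
algebraic form is the identity `M(2A-1)²M = 2MAM - M`, so `Tr((2A-1)²ψ) = 2Tr(Aψ) - Tr(Mφ)`.
Since `K` keeps exactly the spectrum of `A` where `|2x-1| ≤ 2ω-1`, the Loewner inequality
`(2ω-1)²(I-K) ≤ (2A-1)²` holds, and `Tr(Aφ) ≤ 1/2 + μ` by the definition of `μ`. The gentle
measurement bound `|Tr(Xφ) - Tr(XMφM)| ≤ 2√γ` for contractions `X`, applied to `X = A` and
`X = I-K`, passes between `φ` and `ψ`. Together, with `γ ≤ √γ`, they give
`(2ω-1)² Tr((I-K)φ) ≤ 2μ + 7√γ`.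
-/

open scoped Matrix ComplexOrder MatrixOrder

section Pinching
variable {R : Type*} [Ring R]

def pinching (p x : R) : R := p * x * p + (1 - p) * x * (1 - p)

lemma pinching_one {p : R} (hp : IsIdempotentElem p) : pinching p 1 = 1 := by
  simp only [pinching, mul_one, hp.eq, hp.one_sub.eq, add_sub_cancel]

lemma mul_sq_two_mul_pinching_sub_one_mul {p m : R} (hp : IsIdempotentElem p)
    (hm : IsIdempotentElem m) :
    m * (2 * pinching p m - 1) ^ 2 * m = 2 * (m * pinching p m * m) - m := by
  -- with `a = pinching p m` and `x = m * p * m`: `m a m = x² + (m - x)²`, `m a² m = x³ + (m - x)³`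
  have hpp (b : R) : p * (p * b) = p * b := by rw [← mul_assoc, hp.eq]
  have hmm (b : R) : m * (m * b) = m * b := by rw [← mul_assoc, hm.eq]
  simp only [pinching, sq, two_mul, mul_sub, sub_mul, mul_add, add_mul, mul_one, one_mul,
    mul_assoc, hpp, hmm, hm.eq]
  noncomm_ring [hpp, hmm, hp.eq, hm.eq]

variable [StarRing R] [PartialOrder R] [StarOrderedRing R] {p : R}

lemma IsStarProjection.star_mul_self_le_one (hp : IsStarProjection p) : star p * p ≤ 1 := by
  rw [hp.isSelfAdjoint.star_eq, hp.isIdempotentElem.eq]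
  exact hp.le_one

lemma pinching_mono (hp : IsStarProjection p) {x y : R} (hxy : x ≤ y) :
    pinching p x ≤ pinching p y :=
  add_le_add (hp.isSelfAdjoint.conjugate_le_conjugate hxy)
    (hp.one_sub.isSelfAdjoint.conjugate_le_conjugate hxy)

lemma pinching_mul_self_le (hp : IsStarProjection p) {x : R} (hx : IsSelfAdjoint x) :
    pinching p x * pinching p x ≤ pinching p (x * x) := by
  set q := 1 - p with hq
  have hpp (b : R) : p * (p * b) = p * b := by rw [← mul_assoc, hp.isIdempotentElem.eq]
  have hqq (b : R) : q * (q * b) = q * b := by rw [← mul_assoc, hp.one_sub.isIdempotentElem.eq]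
  have hpq (b : R) : p * (q * b) = 0 := by rw [← mul_assoc, hp.mul_one_sub_self, zero_mul]
  have hqp (b : R) : q * (p * b) = 0 := by rw [← mul_assoc, hp.one_sub_mul_self, zero_mul]
  have key : pinching p (x * x) = pinching p x * pinching p x +
      (star (q * x * p) * (q * x * p) + star (p * x * q) * (p * x * q)) := by
    have hxx : x * x = x * p * x + x * q * x := by rw [hq]; noncomm_ring
    have hqs : star q = q := hp.one_sub.isSelfAdjoint.star_eq
    simp only [star_mul, hqs, hp.isSelfAdjoint.star_eq, hx.star_eq, pinching, ← hq, hxx]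
    simp only [mul_add, add_mul, mul_assoc, hpp, hqq, hpq, hqp, mul_zero, add_zero, zero_add]
    abel
  rw [key]
  exact le_add_of_nonneg_right (add_nonneg (star_mul_self_nonneg _) (star_mul_self_nonneg _))

lemma pinching_mul_self_le_one (hp : IsStarProjection p) {m : R} (hm : IsStarProjection m) :
    pinching p m * pinching p m ≤ 1 :=
  calc _ ≤ pinching p (m * m) := pinching_mul_self_le hp hm.isSelfAdjoint
    _ = pinching p m := by rw [hm.isIdempotentElem.eq]
    _ ≤ pinching p 1 := pinching_mono hp hm.le_one
    _ = 1 := pinching_one hp.isIdempotentElem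

end Pinching

lemma sq_two_mul_sub_one_mul_one_sub_indicator_Icc_le_sq {ω : ℝ} (hω : 1 / 2 ≤ ω) (x : ℝ) :
    (2 * ω - 1) ^ 2 * (1 - (Set.Icc (1 - ω) ω).indicator 1 x) ≤ (2 * x - 1) ^ 2 := by
  by_cases hx : x ∈ Set.Icc (1 - ω) ω
  · simp only [Set.indicator_of_mem hx, Pi.one_apply, sub_self, mul_zero]
    positivity
  · rw [Set.indicator_of_notMem hx, sub_zero, mul_one, sq_le_sq, abs_of_nonneg (by linarith)]
    rw [Set.mem_Icc, not_and_or, not_le, not_le] at hx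
    rcases hx with hx | hx
    · rw [abs_of_neg (by linarith)]; linarith
    · rw [abs_of_pos (by linarith)]; linarith

namespace Matrix
variable {𝕜 n : Type*} [RCLike 𝕜] [Fintype n]

lemma trace_mul_le_trace_mul_of_le {X Y ψ : Matrix n n 𝕜} (hXY : X ≤ Y)
    (hψ : ψ.PosSemidef) : (X * ψ).trace ≤ (Y * ψ).trace := by
  classical
  obtain ⟨B, rfl⟩ := CStarAlgebra.nonneg_iff_eq_star_mul_self.mp hψ.nonneg
  have hconj : B * X * star B ≤ B * Y * star B := star_right_conjugate_le_conjugate hXY B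
  simpa only [← mul_assoc, trace_mul_comm _ B, tracePositiveLinearMap_apply]
    using OrderHomClass.mono (tracePositiveLinearMap n ℝ 𝕜) hconj

lemma norm_trace_mul_mul_conjTranspose_le {φ : Matrix n n 𝕜} (hφ : φ.PosSemidef)
    (x y : Matrix n n 𝕜) :
    ‖(y * φ * xᴴ).trace‖ ≤
      √(RCLike.re (x * φ * xᴴ).trace) * √(RCLike.re (y * φ * yᴴ).trace) :=
  let _ := φ.toMatrixSeminormedAddCommGroup hφ
  let _ := φ.toMatrixInnerProductSpace hφ
  norm_inner_le_norm (𝕜 := 𝕜) x y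

variable [DecidableEq n]

lemma trace_pinching_mul (P X φ : Matrix n n 𝕜) :
    (pinching P X * φ).trace = (X * pinching P φ).trace := by
  simp only [pinching, add_mul, mul_add, trace_add, mul_assoc]
  rw [trace_mul_comm P, trace_mul_comm (1 - P)]
  simp only [mul_assoc]

lemma re_trace_mul_mul_conjTranspose_le {X Y : Matrix n n 𝕜} (hX : Xᴴ * X ≤ 1)
    (hY : Y.PosSemidef) :
    RCLike.re (X * Y * Xᴴ).trace ≤ RCLike.re Y.trace := by
  simpa only [one_mul, mul_assoc, trace_mul_comm Xᴴ]
    using RCLike.re_le_re (trace_mul_le_trace_mul_of_le hX hY)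

lemma re_trace_mul_mem_Icc {M φ : Matrix n n 𝕜} (hM : IsStarProjection M) (hφ : φ.PosSemidef)
    (hφtr : φ.trace = 1) : RCLike.re (M * φ).trace ∈ Set.Icc 0 1 := by
  constructor
  · simpa using RCLike.re_le_re (trace_mul_le_trace_mul_of_le hM.nonneg hφ)
  · simpa [hφtr] using RCLike.re_le_re (trace_mul_le_trace_mul_of_le hM.le_one hφ)

theorem norm_trace_mul_sub_trace_mul_compression_le {X M φ : Matrix n n 𝕜} (hX : Xᴴ * X ≤ 1)
    (hM : IsStarProjection M) (hφ : φ.PosSemidef) (hφtr : φ.trace = 1) :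
    ‖(X * φ).trace - (X * (M * φ * M)).trace‖ ≤ 2 * √(1 - RCLike.re (M * φ).trace) := by
  set γ := 1 - RCLike.re (M * φ).trace
  have hNh : (1 - M)ᴴ = 1 - M := hM.one_sub.isSelfAdjoint
  have hφ1 : RCLike.re (1 * φ * 1ᴴ).trace = 1 := by simp [hφtr]
  have hφN : RCLike.re ((1 - M) * φ * (1 - M)ᴴ).trace = γ := by
    rw [hNh, trace_mul_cycle, hM.one_sub.isIdempotentElem.eq, sub_mul, trace_sub, one_mul, hφtr,
      map_sub, RCLike.one_re]
  have hφM : RCLike.re (M * φ * Mᴴ).trace ≤ 1 := by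
    simpa only [hφtr, RCLike.one_re] using
      re_trace_mul_mul_conjTranspose_le hM.star_mul_self_le_one hφ
  have hcontr (y : Matrix n n 𝕜) :
      RCLike.re ((X * y) * φ * (X * y)ᴴ).trace ≤ RCLike.re (y * φ * yᴴ).trace := by
    simpa only [conjTranspose_mul, mul_assoc] using
      re_trace_mul_mul_conjTranspose_le hX (hφ.mul_mul_conjTranspose_same y)
  have hsplit : (X * φ).trace - (X * (M * φ * M)).trace =
      ((X * (1 - M)) * φ * 1ᴴ).trace + ((X * M) * φ * (1 - M)ᴴ).trace := by
    rw [hNh, conjTranspose_one, ← trace_sub, ← trace_add]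
    congr 1
    noncomm_ring
  rw [hsplit, two_mul]
  refine (norm_add_le _ _).trans (add_le_add ?_ ?_)
  · calc _ ≤ √(RCLike.re (1 * φ * 1ᴴ).trace) *
            √(RCLike.re ((1 - M) * φ * (1 - M)ᴴ).trace) :=
          (norm_trace_mul_mul_conjTranspose_le hφ _ _).trans
            (mul_le_mul_of_nonneg_left (Real.sqrt_le_sqrt (hcontr _)) (Real.sqrt_nonneg _))
      _ = √γ := by rw [hφ1, hφN, Real.sqrt_one, one_mul]
  · calc _ ≤ √(RCLike.re ((1 - M) * φ * (1 - M)ᴴ).trace) *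
            √(RCLike.re (M * φ * Mᴴ).trace) :=
          (norm_trace_mul_mul_conjTranspose_le hφ _ _).trans
            (mul_le_mul_of_nonneg_left (Real.sqrt_le_sqrt (hcontr _)) (Real.sqrt_nonneg _))
      _ ≤ √γ * √1 := by
          rw [hφN]; exact mul_le_mul_of_nonneg_left (Real.sqrt_le_sqrt hφM) (Real.sqrt_nonneg _)
      _ = √γ := by rw [Real.sqrt_one, mul_one]

lemma trace_sq_two_mul_pinching_sub_one_mul {P M : Matrix n n 𝕜} (hP : IsIdempotentElem P)
    (hM : IsIdempotentElem M) (φ : Matrix n n 𝕜) :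
    ((2 * pinching P M - 1) ^ 2 * (M * φ * M)).trace =
      2 * (pinching P M * (M * φ * M)).trace - (M * φ).trace := by
  have hrot (Y : Matrix n n 𝕜) : (Y * (M * φ * M)).trace = (M * Y * M * φ).trace := by
    rw [← mul_assoc, trace_mul_comm]
    simp only [mul_assoc]
  rw [hrot, hrot, mul_sq_two_mul_pinching_sub_one_mul hP hM, sub_mul, trace_sub]
  simp only [two_mul, add_mul, trace_add]

lemma IsHermitian.cfc_indicator_one_eq {A : Matrix n n 𝕜} (hA : A.IsHermitian) (s : Set ℝ)
    [DecidablePred (· ∈ s)] :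
    cfc (s.indicator 1) A = (hA.eigenvectorUnitary : Matrix n n 𝕜) *
      diagonal (fun i => if hA.eigenvalues i ∈ s then 1 else 0) *
      (hA.eigenvectorUnitary : Matrix n n 𝕜)ᴴ := by
  rw [hA.cfc_eq, IsHermitian.cfc, Unitary.conjStarAlgAut_apply]
  congr 3
  ext i
  by_cases h : hA.eigenvalues i ∈ s <;> simp [h]

lemma isStarProjection_cfc_indicator_one (A : Matrix n n 𝕜) (s : Set ℝ) :
    IsStarProjection (cfc (s.indicator 1) A) := by
  refine ⟨?_, cfc_predicate _ _⟩
  rw [IsIdempotentElem, ← cfc_mul _ _ _ (A.finite_real_spectrum.continuousOn _)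
    (A.finite_real_spectrum.continuousOn _)]
  congr 1
  ext x
  by_cases h : x ∈ s <;> simp [h]

lemma smul_one_sub_cfc_indicator_Icc_le_sq {A : Matrix n n 𝕜} (hA : A.IsHermitian) {ω : ℝ}
    (hω : 1 / 2 ≤ ω) :
    (2 * ω - 1) ^ 2 • (1 - cfc ((Set.Icc (1 - ω) ω).indicator 1) A) ≤ (2 * A - 1) ^ 2 := by
  have hA' : IsSelfAdjoint A := hA
  have hcont (f : ℝ → ℝ) : ContinuousOn f (spectrum ℝ A) :=
    A.finite_real_spectrum.continuousOn f
  calc _ = cfc (fun x => (2 * ω - 1) ^ 2 * (1 - (Set.Icc (1 - ω) ω).indicator 1 x)) A := by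
        rw [cfc_const_mul _ _ _ (hcont _), cfc_sub _ _ _ (hcont _) (hcont _), cfc_const_one ℝ A]
    _ ≤ cfc (fun x => (2 * x - 1) ^ 2) A :=
        cfc_mono (fun x _ => sq_two_mul_sub_one_mul_one_sub_indicator_Icc_le_sq hω x)
          (hcont _) (hcont _)
    _ = (2 * A - 1) ^ 2 := by
        rw [cfc_pow _ _ _ (hcont _), cfc_sub _ _ _ (hcont _) (hcont _), cfc_const_mul_id _ A,
          cfc_const_one ℝ A, two_smul, two_mul]

lemma sq_mul_re_trace_one_sub_cfc_indicator_Icc_mul_compression_le {P M φ : Matrix n n 𝕜}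
    (hP : IsIdempotentElem P) (hM : IsStarProjection M) (hA : (pinching P M).IsHermitian)
    (hφ : φ.PosSemidef) {ω : ℝ} (hω : 1 / 2 ≤ ω) :
    (2 * ω - 1) ^ 2 *
        RCLike.re ((1 - cfc ((Set.Icc (1 - ω) ω).indicator 1) (pinching P M)) * (M * φ * M)).trace ≤
      2 * RCLike.re (pinching P M * (M * φ * M)).trace - RCLike.re (M * φ).trace := by
  have hψ : (M * φ * M).PosSemidef := by
    simpa only [show Mᴴ = M from hM.isSelfAdjoint] using hφ.mul_mul_conjTranspose_same M
  have h := RCLike.re_le_re <|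
    trace_mul_le_trace_mul_of_le (smul_one_sub_cfc_indicator_Icc_le_sq hA hω) hψ
  rwa [smul_mul, trace_smul, RCLike.smul_re,
    trace_sq_two_mul_pinching_sub_one_mul hP hM.isIdempotentElem, map_sub,
    RCLike.ofNat_mul_re] at h

end Matrix

/-- let `Π`, `M` be orthogonal projections and `φ` a density
operator on a finite-dimensional Hilbert space. With
`γ = 1 - Tr(Mφ)`, `μ = |1/2 - Tr(MΠφΠ) - Tr(M(I-Π)φ(I-Π))|`, and `K` the
spectral projection of `A = ΠMΠ + (I-Π)M(I-Π)` onto eigenvalues in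
`[1-ω, ω]` for `1/2 < ω ≤ 1`, one has
`Tr((I-K)φ) ≤ (2μ + 10√γ)/(1 - 4ω(1-ω))`. -/
theorem jordan_angle_bound {d : Type*} [Fintype d] [DecidableEq d]
    (P M φ : Matrix d d ℂ)
    (hP : P.IsHermitian) (hPproj : P * P = P)
    (hM : M.IsHermitian) (hMproj : M * M = M)
    (hφ : φ.PosSemidef) (hφtr : φ.trace = 1)
    (ω : ℝ) (hω : 1 / 2 < ω) (hω1 : ω ≤ 1)
    (γ μ : ℝ)
    (hγ : γ = 1 - (M * φ).trace.re)
    (hμ : μ = |1 / 2 - (M * (P * φ * P)).trace.re -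
      (M * ((1 - P) * φ * (1 - P))).trace.re|)
    (A : Matrix d d ℂ)
    (hA : A = P * M * P + (1 - P) * M * (1 - P))
    (hAh : A.IsHermitian)
    (K : Matrix d d ℂ)
    (hK : K = (hAh.eigenvectorUnitary : Matrix d d ℂ) *
      Matrix.diagonal (fun i => if hAh.eigenvalues i ∈ Set.Icc (1 - ω) ω
        then (1 : ℂ) else 0) *
      (hAh.eigenvectorUnitary : Matrix d d ℂ)ᴴ) :
    ((1 - K) * φ).trace.re ≤ (2 * μ + 10 * Real.sqrt γ) / (1 - 4 * ω * (1 - ω)) := by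
  have hPp : IsStarProjection P := ⟨hPproj, hP⟩
  have hMp : IsStarProjection M := ⟨hMproj, hM⟩
  replace hA : A = pinching P M := hA
  replace hK : K = cfc ((Set.Icc (1 - ω) ω).indicator 1) A := by
    rw [hK, hAh.cfc_indicator_one_eq]
  have hspectral := Matrix.sq_mul_re_trace_one_sub_cfc_indicator_Icc_mul_compression_le
    hPproj hMp (hA ▸ hAh) hφ hω.le
  have hgentleK := (RCLike.abs_re_le_norm _).trans <|
    Matrix.norm_trace_mul_sub_trace_mul_compression_le
      (hK ▸ (Matrix.isStarProjection_cfc_indicator_one A _).one_sub).star_mul_self_le_one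
      hMp hφ hφtr
  have hgentleA := (RCLike.abs_re_le_norm _).trans <|
    Matrix.norm_trace_mul_sub_trace_mul_compression_le (X := A)
      (by rw [hAh.eq, hA]; exact pinching_mul_self_le_one hPp hMp) hMp hφ hφtr
  have hAφ : (A * φ).trace.re ≤ 1 / 2 + μ := by
    rw [hA, Matrix.trace_pinching_mul, pinching, mul_add, Matrix.trace_add, Complex.add_re, hμ]
    linarith [neg_abs_le (1 / 2 - (M * (P * φ * P)).trace.re -
      (M * ((1 - P) * φ * (1 - P))).trace.re)]
  obtain ⟨hm0, hm1⟩ := Matrix.re_trace_mul_mem_Icc hMp hφ hφtr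
  rw [← hA, ← hK] at hspectral
  simp only [map_sub, RCLike.re_to_complex, ← hγ] at hspectral hgentleK hgentleA hm0 hm1
  have hsqrt_le_one : √γ ≤ 1 := Real.sqrt_le_one.mpr (by linarith)
  have hγ_le_sqrt : γ ≤ √γ := by
    nlinarith [Real.sq_sqrt (show 0 ≤ γ by linarith), Real.sqrt_nonneg γ]
  have hc_pos : 0 < (2 * ω - 1) ^ 2 := by nlinarith
  have hc_le_one : (2 * ω - 1) ^ 2 ≤ 1 := by nlinarith
  rw [show 1 - 4 * ω * (1 - ω) = (2 * ω - 1) ^ 2 by ring, le_div_iff₀ hc_pos]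
  linarith [mul_le_mul_of_nonneg_left (le_of_abs_le hgentleK) hc_pos.le, (abs_le.mp hgentleA).1,
    mul_nonneg (sub_nonneg.2 hc_le_one) (Real.sqrt_nonneg γ)]
end

section
/- Let M be an orthogonal projection on a finite-dimensional Hilbert space and φ a density operator with γ = 1 - Tr(Mφ) > 0 and Tr(Mφ) > 0. Let φ' = MφM / Tr(Mφ). Then ‖φ' - φ‖₁ ≤ 2√γ. -/
/-!
Write `φ = X Xᴴ` with `X = √φ` and `φ' = Y Yᴴ` with `Y = M X / √p`, `p = Tr(Mφ)`. By polarization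
`2 (Y Yᴴ - X Xᴴ) = (Y - X)(Y + X)ᴴ + (Y + X)(Y - X)ᴴ`; pairing the Hermitian matrix `φ' - φ` with
its sign unitary `W`, so that `‖φ' - φ‖₁ = Re Tr(W (φ' - φ))`, and applying Cauchy–Schwarz for the
Hilbert–Schmidt inner product gives `‖φ' - φ‖₁ ≤ ‖Y - X‖₂ ‖Y + X‖₂`. As `‖X‖₂ = ‖Y‖₂ = 1` and
`Re ⟪Y, X⟫ = √p`, the right-hand side is `√((2 - 2√p)(2 + 2√p)) = 2 √(1 - p)`.
-/

open scoped BigOperators Matrix ComplexOrder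

/-- The trace norm of a complex square matrix: the sum of its singular values,
i.e. of the square roots of the eigenvalues of `Aᴴ * A`. -/
noncomputable def traceNorm {X : Type*} [Fintype X] [DecidableEq X]
    (A : Matrix X X ℂ) : ℝ :=
  ∑ i, Real.sqrt ((Matrix.isHermitian_conjTranspose_mul_self A).eigenvalues i)

open scoped MatrixOrder

namespace Matrix

section RCLike

variable {n 𝕜 : Type*} [Fintype n] [DecidableEq n] [RCLike 𝕜]

lemma IsHermitian.trace_cfc {A : Matrix n n 𝕜} (hA : A.IsHermitian) (f : ℝ → ℝ) :
    (cfc f A).trace = ∑ i, (f (hA.eigenvalues i) : 𝕜) := by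
  rw [hA.cfc_eq, IsHermitian.cfc, Unitary.conjStarAlgAut_apply, trace_mul_cycle,
    Unitary.coe_star_mul_self, one_mul, trace_diagonal]
  rfl

lemma norm_trace_conjTranspose_mul_le (A B : Matrix n n 𝕜) :
    ‖(Aᴴ * B).trace‖ ≤ √(RCLike.re (Aᴴ * A).trace) * √(RCLike.re (Bᴴ * B).trace) := by
  -- Cauchy–Schwarz for the inner product `⟪A, B⟫ = Tr(B * 1 * Aᴴ)` that `1 ≥ 0` induces.
  let _ := toMatrixSeminormedAddCommGroup (1 : Matrix n n 𝕜) PosSemidef.one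
  let _ := toMatrixInnerProductSpace (1 : Matrix n n 𝕜) PosSemidef.one
  have hinner : ∀ C D : Matrix n n 𝕜, inner 𝕜 C D = (Cᴴ * D).trace := fun C D ↦ by
    rw [trace_mul_comm]; exact congrArg (fun E ↦ (E * Cᴴ).trace) (mul_one D)
  have hnorm : ∀ C : Matrix n n 𝕜, ‖C‖ = √(RCLike.re (Cᴴ * C).trace) := fun C ↦ by
    rw [norm_eq_sqrt_re_inner (𝕜 := 𝕜), hinner]
  simpa only [hinner, hnorm] using norm_inner_le_norm (𝕜 := 𝕜) A B

lemma re_trace_mul_mul_conjTranspose_le_s14 {W : Matrix n n 𝕜} (hW : Wᴴ * W = 1)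
    (A B : Matrix n n 𝕜) :
    RCLike.re (W * (A * Bᴴ)).trace ≤
      √(RCLike.re (Aᴴ * A).trace) * √(RCLike.re (Bᴴ * B).trace) := by
  have hWA : (W * A)ᴴ * (W * A) = Aᴴ * A := by
    rw [conjTranspose_mul, mul_assoc, ← mul_assoc Wᴴ, hW, one_mul]
  calc RCLike.re (W * (A * Bᴴ)).trace = RCLike.re (Bᴴ * (W * A)).trace := by
        rw [← mul_assoc, trace_mul_comm]
    _ ≤ ‖(Bᴴ * (W * A)).trace‖ := RCLike.re_le_norm _
    _ ≤ √(RCLike.re (Bᴴ * B).trace) * √(RCLike.re (Aᴴ * A).trace) := by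
        simpa only [hWA] using norm_trace_conjTranspose_mul_le B (W * A)
    _ = _ := mul_comm _ _

lemma re_trace_conjTranspose_mul_self_add (A B : Matrix n n 𝕜) :
    RCLike.re ((A + B)ᴴ * (A + B)).trace =
      RCLike.re (Aᴴ * A).trace + 2 * RCLike.re (Aᴴ * B).trace + RCLike.re (Bᴴ * B).trace := by
  have hBA : RCLike.re (Bᴴ * A).trace = RCLike.re (Aᴴ * B).trace := by
    rw [← conjTranspose_conjTranspose A, ← conjTranspose_mul, trace_conjTranspose,
      RCLike.star_def, RCLike.conj_re, conjTranspose_conjTranspose]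
  simp only [conjTranspose_add, add_mul, mul_add, trace_add, map_add, hBA]
  ring

lemma re_trace_conjTranspose_mul_self_smul_add_smul (s t : ℝ) (A B : Matrix n n 𝕜) :
    RCLike.re ((s • A + t • B)ᴴ * (s • A + t • B)).trace =
      s ^ 2 * RCLike.re (Aᴴ * A).trace + 2 * s * t * RCLike.re (Aᴴ * B).trace +
        t ^ 2 * RCLike.re (Bᴴ * B).trace := by
  rw [re_trace_conjTranspose_mul_self_add]
  simp only [conjTranspose_smul, star_trivial, smul_mul, Matrix.mul_smul, trace_smul,
    RCLike.smul_re]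
  ring

end RCLike

variable {n : Type*} [Fintype n] [DecidableEq n]

lemma traceNorm_eq_re_trace_cfc_sqrt (A : Matrix n n ℂ) :
    traceNorm A = (cfc Real.sqrt (Aᴴ * A)).trace.re := by
  simp [(isHermitian_conjTranspose_mul_self A).trace_cfc, traceNorm]

lemma IsHermitian.traceNorm_eq_re_trace_cfc_abs {T : Matrix n n ℂ} (hT : T.IsHermitian) :
    traceNorm T = (cfc (|·| : ℝ → ℝ) T).trace.re := by
  have hsq : Tᴴ * T = cfc (· ^ 2 : ℝ → ℝ) T := by
    rw [hT.eq, cfc_pow_id T 2 hT.isSelfAdjoint, sq]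
  rw [traceNorm_eq_re_trace_cfc_sqrt, hsq, ← cfc_comp Real.sqrt _ T hT.isSelfAdjoint
    ((T.finite_real_spectrum.image _).continuousOn _) (T.finite_real_spectrum.continuousOn _)]
  simp only [Function.comp_def, Real.sqrt_sq_eq_abs]

lemma IsHermitian.exists_traceNorm_eq_re_trace_mul {T : Matrix n n ℂ} (hT : T.IsHermitian) :
    ∃ W : Matrix n n ℂ, Wᴴ * W = 1 ∧ traceNorm T = (W * T).trace.re := by
  set s : ℝ → ℝ := fun x ↦ if x < 0 then -1 else 1
  have hs : ContinuousOn s (spectrum ℝ T) := T.finite_real_spectrum.continuousOn s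
  refine ⟨cfc s T, ?_, ?_⟩
  · rw [← star_eq_conjTranspose, ← cfc_star, ← cfc_mul _ _ _ (by simpa using hs) hs]
    refine (cfc_congr fun x _ ↦ ?_).trans (cfc_const_one ℝ T)
    simp only [s, star_trivial]; split_ifs <;> norm_num
  · have hsT : cfc (fun x ↦ s x * x) T = cfc s T * T := by
      rw [cfc_mul s (fun x ↦ x) T hs, cfc_id' ℝ T]
    rw [hT.traceNorm_eq_re_trace_cfc_abs, ← hsT]
    congr 3
    funext x
    simp only [s]; split_ifs with h
    · rw [abs_of_neg h]; ring
    · rw [abs_of_nonneg (not_lt.mp h)]; ring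

lemma traceNorm_mul_conjTranspose_sub_le (X Y : Matrix n n ℂ) :
    traceNorm (Y * Yᴴ - X * Xᴴ) ≤
      √((Y - X)ᴴ * (Y - X)).trace.re * √((Y + X)ᴴ * (Y + X)).trace.re := by
  have hT : (Y * Yᴴ - X * Xᴴ).IsHermitian :=
    (isHermitian_mul_conjTranspose_self Y).sub (isHermitian_mul_conjTranspose_self X)
  obtain ⟨W, hW, hnorm⟩ := hT.exists_traceNorm_eq_re_trace_mul
  have hpolar : (2 : ℂ) • (Y * Yᴴ - X * Xᴴ) = (Y - X) * (Y + X)ᴴ + (Y + X) * (Y - X)ᴴ := by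
    rw [conjTranspose_add, conjTranspose_sub, two_smul]; noncomm_ring
  have h1 := re_trace_mul_mul_conjTranspose_le_s14 hW (Y - X) (Y + X)
  have h2 := re_trace_mul_mul_conjTranspose_le_s14 hW (Y + X) (Y - X)
  have h2T : 2 * traceNorm (Y * Yᴴ - X * Xᴴ) =
      (W * ((Y - X) * (Y + X)ᴴ)).trace.re + (W * ((Y + X) * (Y - X)ᴴ)).trace.re := by
    rw [hnorm, ← Complex.add_re, ← trace_add, ← mul_add, ← hpolar, Matrix.mul_smul, trace_smul]
    simp
  simp only [RCLike.re_to_complex] at h1 h2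
  linarith

lemma traceNorm_proj_mul_conjTranspose_sub_le {M X : Matrix n n ℂ} (hM : M.IsHermitian)
    (hMproj : M * M = M) (hX : (Xᴴ * X).trace.re = 1) (hq : 0 < (Xᴴ * M * X).trace.re) :
    traceNorm (((Xᴴ * M * X).trace.re : ℂ)⁻¹ • (M * X * (M * X)ᴴ) - X * Xᴴ) ≤
      2 * √(1 - (Xᴴ * M * X).trace.re) := by
  set q := (Xᴴ * M * X).trace.re
  have hMXX : ((M * X)ᴴ * X).trace.re = q := by rw [conjTranspose_mul, hM.eq]
  have hMX : ((M * X)ᴴ * (M * X)).trace.re = q := by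
    rw [← hMXX, conjTranspose_mul, hM.eq, mul_assoc, ← mul_assoc M, hMproj, mul_assoc]
  set Y := (√q)⁻¹ • (M * X)
  have hY : (q : ℂ)⁻¹ • (M * X * (M * X)ᴴ) = Y * Yᴴ := by
    rw [conjTranspose_smul, star_trivial, smul_mul, Matrix.mul_smul, smul_smul, ← mul_inv,
      Real.mul_self_sqrt hq.le, ← Complex.ofReal_inv, Complex.coe_smul]
  have hYX (t : ℝ) : ((Y + t • X)ᴴ * (Y + t • X)).trace.re = 1 + 2 * t * √q + t ^ 2 := by
    rw [← RCLike.re_to_complex, re_trace_conjTranspose_mul_self_smul_add_smul]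
    simp only [RCLike.re_to_complex, hMX, hMXX, hX, inv_pow, Real.sq_sqrt hq.le]
    have hsqrt : (√q)⁻¹ * q = √q := by rw [inv_mul_eq_div, Real.div_sqrt]
    linear_combination inv_mul_cancel₀ hq.ne' + 2 * t * hsqrt
  have hminus := hYX (-1)
  have hplus := hYX 1
  rw [neg_one_smul, ← sub_eq_add_neg] at hminus
  rw [one_smul] at hplus
  have hs : 0 ≤ ((Y - X)ᴴ * (Y - X)).trace.re :=
    (RCLike.nonneg_iff.mp (posSemidef_conjTranspose_mul_self (Y - X)).trace_nonneg).1
  calc traceNorm ((q : ℂ)⁻¹ • (M * X * (M * X)ᴴ) - X * Xᴴ)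
      ≤ √((Y - X)ᴴ * (Y - X)).trace.re * √((Y + X)ᴴ * (Y + X)).trace.re :=
        hY ▸ traceNorm_mul_conjTranspose_sub_le X Y
    _ = √(2 ^ 2 * (1 - q)) := by
        rw [← Real.sqrt_mul hs, hminus, hplus]
        congr 1
        linear_combination (-4) * Real.sq_sqrt hq.le
    _ = 2 * √(1 - q) := by rw [Real.sqrt_mul (by norm_num), Real.sqrt_sq (by norm_num)]

end Matrix

open Matrix

/-- gentle measurement lemma: if `M` is an orthogonal projection
and `φ` a density matrix with `Tr(Mφ) > 0` and `γ = 1 - Tr(Mφ)`, then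
`‖ MφM/Tr(Mφ) - φ ‖₁ ≤ 2√γ`. -/
theorem gentle_measurement {d : Type*} [Fintype d] [DecidableEq d]
    (M φ : Matrix d d ℂ)
    (hM : M.IsHermitian) (hMproj : M * M = M)
    (hφ : φ.PosSemidef) (hφtr : φ.trace = 1)
    (γ : ℝ) (hγ : γ = 1 - (M * φ).trace.re) (hγpos : 0 < (M * φ).trace.re)
    (φ' : Matrix d d ℂ)
    (hφ' : φ' = ((M * φ).trace.re : ℂ)⁻¹ • (M * φ * M)) :
    traceNorm (φ' - φ) ≤ 2 * Real.sqrt γ := by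
  set X := CFC.sqrt φ
  have hXh : Xᴴ = X := (CFC.sqrt_nonneg φ).isSelfAdjoint
  have hXX : X * X = φ := CFC.sqrt_mul_sqrt_self φ hφ.nonneg
  have hq : (Xᴴ * M * X).trace = (M * φ).trace := by
    rw [hXh, trace_mul_cycle, hXX, trace_mul_comm]
  have hX : (Xᴴ * X).trace.re = 1 := by simp [hXh, hXX, hφtr]
  have hφ'X : φ' = ((M * φ).trace.re : ℂ)⁻¹ • (M * X * (M * X)ᴴ) := by
    rw [hφ', conjTranspose_mul, hM.eq, hXh, ← hXX]
    simp only [mul_assoc]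
  have key := traceNorm_proj_mul_conjTranspose_sub_le hM hMproj hX (hq ▸ hγpos)
  rwa [hq, ← hφ'X, hXh, hXX, ← hγ] at key
end

section
/- Let c, s be reals with c² + s² = 1 and let α_j ≥ 0 be weights summing to 1 over an index set J, with c_j² + s_j² = 1 for each j. Suppose |1/2 - Σ_j α_j (c_j⁴ + s_j⁴)| ≤ μ. Let ω ∈ (1/2, 1] and let S = {j : min(c_j², s_j²) ≥ 1-ω}. Then Σ_{j ∉ S} α_j ≤ 2μ / (1 - 4ω(1-ω)). -/
open scoped BigOperators Classical

/-- let `α_j ≥ 0` be weights summing to `1` over a finite index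
set, with `c_j² + s_j² = 1` for each `j`, and suppose
`|1/2 - Σ_j α_j (c_j⁴ + s_j⁴)| ≤ μ`. Let `ω ∈ (1/2,1]` and
`S = {j : min(c_j², s_j²) ≥ 1-ω}`. Then `Σ_{j ∉ S} α_j ≤ 2μ/(1-4ω(1-ω))`. -/
theorem weight_outside_good_blocks_le {J : Type*} [Fintype J]
    (α c s : J → ℝ)
    (hα : ∀ j, 0 ≤ α j) (hαsum : ∑ j, α j = 1)
    (hcs : ∀ j, c j ^ 2 + s j ^ 2 = 1)
    (μ : ℝ) (hμ : |1 / 2 - ∑ j, α j * (c j ^ 4 + s j ^ 4)| ≤ μ)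
    (ω : ℝ) (hω : 1 / 2 < ω) (hω1 : ω ≤ 1) :
    ∑ j ∈ Finset.univ.filter
        (fun j => ¬ (1 - ω ≤ min (c j ^ 2) (s j ^ 2))), α j ≤
      2 * μ / (1 - 4 * ω * (1 - ω)) := by
  classical
  obtain ⟨D, hDdef⟩ : ∃ D : ℝ, D = 1 - 4 * ω * (1 - ω) := ⟨_, rfl⟩
  rw [← hDdef]
  have hD : 0 < D := by rw [hDdef]; nlinarith
  set T := Finset.univ.filter (fun j => ¬ (1 - ω ≤ min (c j ^ 2) (s j ^ 2))) with hT
  have hpt : ∀ j ∈ T, α j * (D / 2) ≤ α j * (c j ^ 4 + s j ^ 4 - 1 / 2) := by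
    intro j hj
    have hj' : min (c j ^ 2) (s j ^ 2) < 1 - ω :=
      not_le.mp (Finset.mem_filter.mp hj).2
    refine mul_le_mul_of_nonneg_left ?_ (hα j)
    have h1 := hcs j
    rcases min_lt_iff.mp hj' with h | h
    · have hs : 0 ≤ s j ^ 2 := sq_nonneg _
      rw [hDdef]; nlinarith [sq_nonneg (c j ^ 2 + ω - 1)]
    · have hc : 0 ≤ c j ^ 2 := sq_nonneg _
      rw [hDdef]; nlinarith [sq_nonneg (s j ^ 2 + ω - 1)]
  have hsum1 : ∑ j ∈ T, α j * (D / 2) ≤ ∑ j ∈ T, α j * (c j ^ 4 + s j ^ 4 - 1 / 2) :=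
    Finset.sum_le_sum hpt
  have hsum2 : ∑ j ∈ T, α j * (c j ^ 4 + s j ^ 4 - 1 / 2)
      ≤ ∑ j, α j * (c j ^ 4 + s j ^ 4 - 1 / 2) := by
    apply Finset.sum_le_sum_of_subset_of_nonneg (Finset.subset_univ T)
    intro j _ _
    have h1 := hcs j
    have := sq_nonneg (c j ^ 2 - s j ^ 2)
    have : (0:ℝ) ≤ c j ^ 4 + s j ^ 4 - 1 / 2 := by nlinarith
    exact mul_nonneg (hα j) this
  have hsum3 : ∑ j, α j * (c j ^ 4 + s j ^ 4 - 1 / 2)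
      = (∑ j, α j * (c j ^ 4 + s j ^ 4)) - 1 / 2 := by
    rw [Finset.sum_congr rfl (fun j _ => by ring :
      ∀ j ∈ Finset.univ, α j * (c j ^ 4 + s j ^ 4 - 1 / 2)
        = α j * (c j ^ 4 + s j ^ 4) - α j * (1 / 2)),
      Finset.sum_sub_distrib, ← Finset.sum_mul, hαsum]
    ring
  have habs : (∑ j, α j * (c j ^ 4 + s j ^ 4)) - 1 / 2 ≤ μ := by
    have := abs_le.mp hμ
    linarith [this.1]
  have hkey : (∑ j ∈ T, α j) * (D / 2) ≤ μ := by
    rw [Finset.sum_mul]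
    calc ∑ j ∈ T, α j * (D / 2) ≤ _ := hsum1
      _ ≤ _ := hsum2
      _ ≤ μ := by rw [hsum3]; exact habs
  rw [le_div_iff₀ hD]
  have h2 : (∑ j ∈ T, α j) * D = 2 * ((∑ j ∈ T, α j) * (D / 2)) := by ring
  linarith
end
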